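/- Let F : ℝ^N → ℝ^N be locally Lipschitz and assume that for every R > 0 there exist a continuously differentiable function E_R : ℝ^N → ℝ and α_R > 0 such that F is quasi-gradient for E_R on the closed ball B̄(0, R) with angle constant α_R, and such that E_R has the KL property at every point. Let u : [0, ∞) → ℝ^N be a bounded solution of u′(t) + F(u(t)) = 0. Then u(t) converges as t → +∞ to a point u∞ with F(u∞) = 0, u′ is integrable on (0, ∞) and u′(t) → 0. Furthermore, for any R ≥ sup_{t ≥ 0} ‖u(t)‖ and any desingularizing function φ of E_R at u∞, one has ‖u(t) − u∞‖ ≤ (1/α_R)·φ(E_R(u(t)) − E_R(u∞)) for all sufficiently large t. -/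

import Mathlib

open Real Set Metric Filter Topology MeasureTheory RealInnerProductSpace

noncomputable section

/-- `φ` is a desingularizing function of `E` at `ub` on `B(ub, η)`, with domain `[0, r₀)`. -/
def DesingOn {N : ℕ} (E : EuclideanSpace ℝ (Fin N) → ℝ) (ub : EuclideanSpace ℝ (Fin N))
    (η r₀ : ℝ) (φ : ℝ → ℝ) : Prop :=
  0 < r₀ ∧ 0 < η ∧ φ 0 = 0 ∧ (∀ s ∈ Set.Ico (0:ℝ) r₀, 0 ≤ φ s) ∧
  ContinuousOn φ (Set.Ico 0 r₀) ∧
  (∀ s ∈ Set.Ioo (0:ℝ) r₀, DifferentiableAt ℝ φ s) ∧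
  ContinuousOn (deriv φ) (Set.Ioo 0 r₀) ∧
  (∀ s ∈ Set.Ioo (0:ℝ) r₀, 0 < deriv φ s) ∧
  (∀ u ∈ Metric.ball ub η, |E u - E ub| < r₀) ∧
  (∀ u ∈ Metric.ball ub η, E u ≠ E ub →
    1 ≤ deriv φ (|E u - E ub|) * ‖gradient E u‖)

/-- `E` has the KL property at `ub`. -/
def KLAt {N : ℕ} (E : EuclideanSpace ℝ (Fin N) → ℝ) (ub : EuclideanSpace ℝ (Fin N)) : Prop :=
  ∃ η r₀ φ, DesingOn E ub η r₀ φ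

/-!
Along the trajectory the energy `E = E_R` is nonincreasing, and the angle condition transfers the
KL inequality from `∇E` to `F`: `α ‖F (u t)‖ ≤ -(d/dt) φ (E (u t) - E u∞)`. Hence the length of
the trajectory after time `t` is at most `φ (E (u t) - E u∞) / α`, as long as `u` stays in the KL
neighbourhood of `u∞`. Started close enough to an ω-limit point `u∞`, this bound keeps `u` in that
neighbourhood forever, so `u' = -F ∘ u` is integrable, `u` converges, and its limit is a rest
point because an integrable function cannot tend to a nonzero limit. If the energy reaches
`E u∞` in finite time, the rest-point equivalence makes the trajectory stationary instead.
-/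

theorem AntitoneOn.le_of_tendsto_comp {α β ι : Type*} [Preorder α] [Preorder β]
    [TopologicalSpace β] [ClosedIicTopology β] {l : Filter ι} [l.NeBot] {f : α → β} {a : α}
    {τ : ι → α} {c : β} (hf : AntitoneOn f (Ici a)) (hτ : Tendsto τ l atTop)
    (hlim : Tendsto (fun i => f (τ i)) l (𝓝 c)) :
    ∀ t ≥ a, c ≤ f t := fun t ht =>
  le_of_tendsto hlim ((hτ.eventually_ge_atTop t).mono fun _ hi => hf ht (ht.trans hi) hi)

theorem eq_zero_of_tendsto_of_integrableOn_Ioi {G : Type*} [NormedAddCommGroup G] {f : ℝ → G}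
    {a : ℝ} {b : G} (hf : IntegrableOn f (Ioi a)) (hlim : Tendsto f atTop (𝓝 b)) : b = 0 := by
  refine IntegrableAtFilter.eq_zero_of_tendsto ⟨Ioi a, Ioi_mem_atTop a, hf⟩ (fun s hs => ?_) hlim
  obtain ⟨c, hc⟩ := mem_atTop_sets.1 hs
  exact top_le_iff.1 (volume_Ici (a := c) ▸ measure_mono hc)

section Trajectory

variable {H : Type*} [NormedAddCommGroup H] [InnerProductSpace ℝ H]
  {E : H → ℝ} {F : H → H} {u : ℝ → H} {α c : ℝ}

theorem mul_norm_le_mul_inner_of_angle {g f : H} {d : ℝ} (hα : 0 ≤ α)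
    (hangle : α * (‖g‖ * ‖f‖) ≤ ⟪g, f⟫) (hd : 0 ≤ d) (hKL : 1 ≤ d * ‖g‖) :
    α * ‖f‖ ≤ d * ⟪g, f⟫ :=
  calc α * ‖f‖ ≤ α * ‖f‖ * (d * ‖g‖) := le_mul_of_one_le_right (by positivity) hKL
    _ = d * (α * (‖g‖ * ‖f‖)) := by ring
    _ ≤ d * ⟪g, f⟫ := mul_le_mul_of_nonneg_left hangle hd

theorem eq_zero_of_inner_eq_zero_of_angle {g f : H} (hα : 0 < α)
    (hangle : α * (‖g‖ * ‖f‖) ≤ ⟪g, f⟫) (hrest : g = 0 → f = 0) (h : ⟪g, f⟫ = 0) : f = 0 := by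
  have hprod : ‖g‖ * ‖f‖ = 0 :=
    le_antisymm (nonpos_of_mul_nonpos_right (h ▸ hangle) hα) (by positivity)
  rcases mul_eq_zero.1 hprod with hg | hf
  · exact hrest (norm_eq_zero.1 hg)
  · exact norm_eq_zero.1 hf

theorem hasDerivAt_energy [CompleteSpace H] {t : ℝ} (hE : DifferentiableAt ℝ E (u t))
    (hu : HasDerivAt u (-F (u t)) t) :
    HasDerivAt (fun s => E (u s)) (-⟪gradient E (u t), F (u t)⟫) t :=
  (hE.hasGradientAt.hasFDerivAt.comp_hasDerivAt t hu).congr_deriv (inner_neg_right _ _)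

theorem antitoneOn_energy [CompleteSpace H] (hE : Differentiable ℝ E) (hα : 0 ≤ α)
    (hangle : ∀ t ≥ 0, α * (‖gradient E (u t)‖ * ‖F (u t)‖) ≤ ⟪gradient E (u t), F (u t)⟫)
    (hode : ∀ t ≥ 0, HasDerivAt u (-F (u t)) t) :
    AntitoneOn (fun t => E (u t)) (Ici 0) := by
  refine antitoneOn_of_hasDerivWithinAt_nonpos (f' := fun t => -⟪gradient E (u t), F (u t)⟫)
    (convex_Ici 0)
    (fun t ht => (hasDerivAt_energy (hE _) (hode t ht)).continuousAt.continuousWithinAt)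
    (fun t ht => ?_) (fun t ht => ?_)
  · rw [interior_Ici] at ht ⊢
    exact (hasDerivAt_energy (hE _) (hode t ht.le)).hasDerivWithinAt
  · rw [interior_Ici] at ht
    exact neg_nonpos.2 ((by positivity : 0 ≤ α * _).trans (hangle t ht.le))

theorem integrableOn_Icc_comp_trajectory (hF : Continuous F)
    (hode : ∀ t ≥ 0, HasDerivAt u (-F (u t)) t) {a b : ℝ} (ha : 0 ≤ a) :
    IntegrableOn (fun t => F (u t)) (Icc a b) :=
  ContinuousOn.integrableOn_Icc fun t ht =>
    (hF.continuousAt.comp (hode t (ha.trans ht.1)).continuousAt).continuousWithinAt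

theorem norm_sub_le_integral_norm [CompleteSpace H] (hF : Continuous F)
    (hode : ∀ t ≥ 0, HasDerivAt u (-F (u t)) t) {s t : ℝ} (hs : 0 ≤ s) (hst : s ≤ t) :
    ‖u t - u s‖ ≤ ∫ σ in s..t, ‖F (u σ)‖ := by
  have hint : IntervalIntegrable (fun σ => -F (u σ)) volume s t :=
    (intervalIntegrable_iff_integrableOn_Icc_of_le hst).2
      (integrableOn_Icc_comp_trajectory hF hode hs).neg
  rw [← intervalIntegral.integral_eq_sub_of_hasDerivAt
    (fun σ hσ => hode σ (hs.trans (uIcc_of_le hst ▸ hσ).1)) hint]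
  simpa using intervalIntegral.norm_integral_le_integral_norm (f := fun σ => -F (u σ)) hst

theorem integrableOn_Ioi_comp_of_tail (hF : Continuous F)
    (hode : ∀ t ≥ 0, HasDerivAt u (-F (u t)) t) {a b : ℝ} (ha : 0 ≤ a) (hab : a ≤ b)
    (h : IntegrableOn (fun t => F (u t)) (Ioi b)) : IntegrableOn (fun t => F (u t)) (Ioi a) := by
  rw [← Ioc_union_Ioi_eq_Ioi hab]
  exact ((integrableOn_Icc_comp_trajectory hF hode ha).mono_set Ioc_subset_Icc_self).union h

theorem stationary_or_energy_gt [CompleteSpace H] (hE : Differentiable ℝ E) (hα : 0 < α)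
    (hangle : ∀ t ≥ 0, α * (‖gradient E (u t)‖ * ‖F (u t)‖) ≤ ⟪gradient E (u t), F (u t)⟫)
    (hrest : ∀ t ≥ 0, gradient E (u t) = 0 → F (u t) = 0)
    (hode : ∀ t ≥ 0, HasDerivAt u (-F (u t)) t) (hc : ∀ t ≥ 0, c ≤ E (u t)) :
    (∃ t₁ ≥ 0, ∀ t > t₁, F (u t) = 0) ∨ ∀ t ≥ 0, c < E (u t) := by
  by_cases hreach : ∃ t₁ ≥ 0, E (u t₁) = c
  · obtain ⟨t₁, ht₁, hEt₁⟩ := hreach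
    have hanti := antitoneOn_energy hE hα.le hangle hode
    have hconst : ∀ t ≥ t₁, E (u t) = c := fun t ht =>
      le_antisymm (hEt₁ ▸ hanti ht₁ (ht₁.trans ht) ht) (hc t (ht₁.trans ht))
    refine .inl ⟨t₁, ht₁, fun t ht => ?_⟩
    have ht0 : 0 ≤ t := ht₁.trans ht.le
    have hderiv0 : HasDerivAt (fun s => E (u s)) 0 t :=
      (hasDerivAt_const t c).congr_of_eventuallyEq
        (eventually_of_mem (Ioi_mem_nhds ht) fun s hs => hconst s (le_of_lt hs))
    exact eq_zero_of_inner_eq_zero_of_angle hα (hangle t ht0) (hrest t ht0)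
      (neg_eq_zero.1 ((hasDerivAt_energy (hE _) (hode t ht0)).unique hderiv0))
  · push Not at hreach
    exact .inr fun t ht => (hc t ht).lt_of_ne (hreach t ht).symm

end Trajectory

section Desingularizing

variable {N : ℕ} {E : EuclideanSpace ℝ (Fin N) → ℝ}
  {F : EuclideanSpace ℝ (Fin N) → EuclideanSpace ℝ (Fin N)} {u : ℝ → EuclideanSpace ℝ (Fin N)}
  {ub : EuclideanSpace ℝ (Fin N)} {α η r₀ : ℝ} {φ : ℝ → ℝ}

theorem DesingOn.sub_mem_Ico (hd : DesingOn E ub η r₀ φ) {v : EuclideanSpace ℝ (Fin N)}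
    (hv : v ∈ ball ub η) (hle : E ub ≤ E v) : E v - E ub ∈ Ico 0 r₀ := by
  obtain ⟨-, -, -, -, -, -, -, -, hsmall, -⟩ := hd
  exact ⟨sub_nonneg.2 hle, (le_abs_self _).trans_lt (hsmall v hv)⟩

theorem DesingOn.nonneg (hd : DesingOn E ub η r₀ φ) {v : EuclideanSpace ℝ (Fin N)}
    (hv : v ∈ ball ub η) (hle : E ub ≤ E v) : 0 ≤ φ (E v - E ub) :=
  hd.2.2.2.1 _ (hd.sub_mem_Ico hv hle)

theorem DesingOn.tendsto_comp {ι : Type*} {l : Filter ι} {x : ι → ℝ}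
    (hd : DesingOn E ub η r₀ φ) (hx : Tendsto x l (𝓝 0)) (hx0 : ∀ᶠ i in l, 0 ≤ x i) :
    Tendsto (fun i => φ (x i)) l (𝓝 0) := by
  obtain ⟨hr₀, -, hφ0, -, hφc, -⟩ := hd
  rw [← hφ0]
  refine (hφc 0 ⟨le_rfl, hr₀⟩).tendsto.comp (tendsto_nhdsWithin_iff.2 ⟨hx, ?_⟩)
  filter_upwards [hx0, hx.eventually_lt_const hr₀] with i h0 hr using ⟨h0, hr⟩

theorem integral_norm_le_desingOn (hE : Differentiable ℝ E) (hα : 0 < α) (hF : Continuous F)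
    (hangle : ∀ t ≥ 0, α * (‖gradient E (u t)‖ * ‖F (u t)‖) ≤ ⟪gradient E (u t), F (u t)⟫)
    (hode : ∀ t ≥ 0, HasDerivAt u (-F (u t)) t) (hd : DesingOn E ub η r₀ φ) {s t : ℝ}
    (hs : 0 ≤ s) (hst : s < t) (hball : ∀ σ ∈ Ico s t, u σ ∈ ball ub η)
    (hpos : ∀ σ ∈ Icc s t, E ub < E (u σ)) :
    ∫ σ in s..t, ‖F (u σ)‖ ≤ φ (E (u s) - E ub) / α := by
  have hanti := antitoneOn_energy hE hα.le hangle hode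
  have hgap : ∀ σ ∈ Icc s t, E (u σ) - E ub ∈ Ioo 0 r₀ := fun σ hσ =>
    ⟨sub_pos.2 (hpos σ hσ), (sub_le_sub_right (hanti hs (hs.trans hσ.1) hσ.1) _).trans_lt
      (hd.sub_mem_Ico (hball s ⟨le_rfl, hst⟩) (hpos s ⟨le_rfl, hst.le⟩).le).2⟩
  obtain ⟨-, -, -, hφnn, hφc, hφd, -, hφ'pos, -, hKL⟩ := hd
  have hdecay := intervalIntegral.integral_le_sub_of_hasDeriv_right_of_le hst.le
    (g := fun σ => -φ (E (u σ) - E ub))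
    (g' := fun σ => deriv φ (E (u σ) - E ub) * ⟪gradient E (u σ), F (u σ)⟫)
    (φ := fun σ => α * ‖F (u σ)‖) ?_ ?_ ?_ ?_
  · rw [le_div_iff₀ hα, mul_comm, ← intervalIntegral.integral_const_mul]
    linarith [hφnn _ (Ioo_subset_Ico_self (hgap t ⟨hst.le, le_rfl⟩))]
  · refine (hφc.comp (fun σ hσ => ContinuousAt.continuousWithinAt ?_)
      fun σ hσ => Ioo_subset_Ico_self (hgap σ hσ)).neg
    exact ((hE.continuous.continuousAt).comp (hode σ (hs.trans hσ.1)).continuousAt).sub_const _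
  · intro σ hσ
    have hσ0 : 0 ≤ σ := hs.trans hσ.1.le
    exact ((((hφd _ (hgap σ (Ioo_subset_Icc_self hσ))).hasDerivAt.comp σ
      ((hasDerivAt_energy (hE _) (hode σ hσ0)).sub_const (E ub))).neg).congr_deriv
        (by ring)).hasDerivWithinAt
  · exact (integrableOn_Icc_comp_trajectory hF hode hs).norm.const_mul α
  · intro σ hσ
    have hgapσ := hgap σ (Ioo_subset_Icc_self hσ)
    have hKLσ := hKL (u σ) (hball σ (Ioo_subset_Ico_self hσ)) (hpos σ (Ioo_subset_Icc_self hσ)).ne'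
    rw [abs_of_pos hgapσ.1] at hKLσ
    exact mul_norm_le_mul_inner_of_angle hα.le (hangle σ (hs.trans hσ.1.le))
      (hφ'pos _ hgapσ).le hKLσ

theorem forall_mem_ball_of_desingOn (hE : Differentiable ℝ E) (hα : 0 < α) (hF : Continuous F)
    (hangle : ∀ t ≥ 0, α * (‖gradient E (u t)‖ * ‖F (u t)‖) ≤ ⟪gradient E (u t), F (u t)⟫)
    (hode : ∀ t ≥ 0, HasDerivAt u (-F (u t)) t) (hd : DesingOn E ub η r₀ φ) {t₀ : ℝ}
    (ht₀ : 0 ≤ t₀) (hpos : ∀ t ≥ t₀, E ub < E (u t))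
    (hclose : dist (u t₀) ub < η / 2) (hsmall : φ (E (u t₀) - E ub) < α * (η / 2)) :
    ∀ t ≥ t₀, u t ∈ ball ub η := by
  by_contra! hexit
  obtain ⟨τ, hτ, hτout⟩ := hexit
  set exits := Icc t₀ τ ∩ (fun σ => dist (u σ) ub) ⁻¹' Ici η
  have hcompact : IsCompact exits := by
    refine isCompact_Icc.of_isClosed_subset ?_ inter_subset_left
    refine ContinuousOn.preimage_isClosed_of_isClosed (fun σ hσ => ?_) isClosed_Icc isClosed_Ici
    exact (continuous_id.dist continuous_const).continuousAt.comp
      (hode σ (ht₀.trans hσ.1)).continuousAt |>.continuousWithinAt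
  obtain ⟨T, ⟨hT, hTout⟩, hTmin⟩ :=
    hcompact.exists_isLeast ⟨τ, right_mem_Icc.2 hτ, not_lt.1 (mem_ball.not.1 hτout)⟩
  have hbefore : ∀ σ ∈ Ico t₀ T, u σ ∈ ball ub η := fun σ hσ =>
    mem_ball.2 (not_le.1 fun hout => (hTmin ⟨⟨hσ.1, hσ.2.le.trans hT.2⟩, hout⟩).not_gt hσ.2)
  have hT₀ : t₀ < T := hT.1.lt_of_ne fun h => by
    rw [← h] at hTout
    linarith [show η ≤ dist (u t₀) ub from hTout, (hd.2.1 : 0 < η)]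
  have hlength := (norm_sub_le_integral_norm hF hode ht₀ hT.1).trans
    (integral_norm_le_desingOn hE hα hF hangle hode hd ht₀ hT₀ hbefore fun σ hσ => hpos σ hσ.1)
  have hsmall' : φ (E (u t₀) - E ub) / α < η / 2 := by rwa [div_lt_iff₀' hα]
  have hinside : dist (u T) ub < η :=
    (dist_triangle _ (u t₀) _).trans_lt (by rw [dist_eq_norm]; linarith)
  exact hinside.not_ge hTout

theorem integrableOn_Ioi_of_desingOn (hE : Differentiable ℝ E) (hα : 0 < α) (hF : Continuous F)
    (hangle : ∀ t ≥ 0, α * (‖gradient E (u t)‖ * ‖F (u t)‖) ≤ ⟪gradient E (u t), F (u t)⟫)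
    (hode : ∀ t ≥ 0, HasDerivAt u (-F (u t)) t) (hd : DesingOn E ub η r₀ φ) {t₀ : ℝ}
    (ht₀ : 0 ≤ t₀) (hpos : ∀ t ≥ t₀, E ub < E (u t))
    (hclose : dist (u t₀) ub < η / 2) (hsmall : φ (E (u t₀) - E ub) < α * (η / 2)) :
    IntegrableOn (fun t => F (u t)) (Ioi t₀) := by
  have hstay := forall_mem_ball_of_desingOn hE hα hF hangle hode hd ht₀ hpos hclose hsmall
  refine integrableOn_Ioi_of_intervalIntegral_norm_bounded (φ (E (u t₀) - E ub) / α) t₀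
    (fun s => (integrableOn_Icc_comp_trajectory hF hode ht₀).mono_set Ioc_subset_Icc_self)
    tendsto_id ?_
  filter_upwards [eventually_gt_atTop t₀] with s hs
  exact integral_norm_le_desingOn hE hα hF hangle hode hd ht₀ hs (fun σ hσ => hstay σ hσ.1)
    fun σ hσ => hpos σ hσ.1

theorem integrableOn_Ioi_of_forall_KLAt (hE : Differentiable ℝ E) (hα : 0 < α)
    (hF : Continuous F)
    (hangle : ∀ t ≥ 0, α * (‖gradient E (u t)‖ * ‖F (u t)‖) ≤ ⟪gradient E (u t), F (u t)⟫)
    (hrest : ∀ t ≥ 0, gradient E (u t) = 0 → F (u t) = 0)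
    (hode : ∀ t ≥ 0, HasDerivAt u (-F (u t)) t) {C : ℝ} (hbdd : ∀ t ≥ 0, ‖u t‖ ≤ C)
    (hKL : ∀ x, KLAt E x) :
    IntegrableOn (fun t => F (u t)) (Ioi 0) := by
  obtain ⟨uinf, -, ψ, hψ, hlim⟩ :=
    (isCompact_closedBall (0 : EuclideanSpace ℝ (Fin N)) C).tendsto_subseq
      (x := fun n : ℕ => u n) fun n => mem_closedBall_zero_iff.2 (hbdd n n.cast_nonneg)
  have hτ : Tendsto (fun n => (ψ n : ℝ)) atTop atTop :=
    tendsto_natCast_atTop_atTop.comp hψ.tendsto_atTop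
  have hElim : Tendsto (fun n => E (u (ψ n))) atTop (𝓝 (E uinf)) :=
    (hE.continuous.tendsto uinf).comp hlim
  have hge := (antitoneOn_energy hE hα.le hangle hode).le_of_tendsto_comp hτ hElim
  rcases stationary_or_energy_gt hE hα hangle hrest hode hge with ⟨t₁, ht₁, hF0⟩ | hpos
  · exact integrableOn_Ioi_comp_of_tail hF hode le_rfl ht₁
      (integrableOn_zero.congr_fun (fun t ht => (hF0 t ht).symm) measurableSet_Ioi)
  obtain ⟨η, r₀, φ, hd⟩ := hKL uinf
  have hφlim : Tendsto (fun n => φ (E (u (ψ n)) - E uinf)) atTop (𝓝 0) :=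
    hd.tendsto_comp (by simpa using hElim.sub_const (E uinf))
      (Eventually.of_forall fun n => sub_nonneg.2 (hge _ (ψ n).cast_nonneg))
  have hη : 0 < η := hd.2.1
  obtain ⟨n, hclose, hsmall⟩ := ((hlim.eventually (ball_mem_nhds uinf (half_pos hη))).and
    (hφlim.eventually (gt_mem_nhds (mul_pos hα (half_pos hη))))).exists
  exact integrableOn_Ioi_comp_of_tail hF hode le_rfl (ψ n).cast_nonneg
    (integrableOn_Ioi_of_desingOn hE hα hF hangle hode hd (ψ n).cast_nonneg
      (fun t ht => hpos t ((ψ n).cast_nonneg.trans ht)) hclose hsmall)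

theorem eventually_norm_sub_le_desingOn (hE : Differentiable ℝ E) (hα : 0 < α)
    (hF : Continuous F)
    (hangle : ∀ t ≥ 0, α * (‖gradient E (u t)‖ * ‖F (u t)‖) ≤ ⟪gradient E (u t), F (u t)⟫)
    (hrest : ∀ t ≥ 0, gradient E (u t) = 0 → F (u t) = 0)
    (hode : ∀ t ≥ 0, HasDerivAt u (-F (u t)) t) (hconv : Tendsto u atTop (𝓝 ub))
    (hd : DesingOn E ub η r₀ φ) :
    ∀ᶠ t in atTop, ‖u t - ub‖ ≤ φ (E (u t) - E ub) / α := by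
  have hge : ∀ t ≥ 0, E ub ≤ E (u t) := (antitoneOn_energy hE hα.le hangle hode).le_of_tendsto_comp
    tendsto_id ((hE.continuous.tendsto ub).comp hconv)
  have hnear : ∀ᶠ t in atTop, ∀ s ≥ t, u s ∈ ball ub η :=
    eventually_forall_ge_atTop.2 (hconv.eventually (ball_mem_nhds ub (hd.2.1 : 0 < η)))
  have hbound : ∀ᶠ t in atTop, ∀ s > t, ‖u s - u t‖ ≤ φ (E (u t) - E ub) / α := by
    rcases stationary_or_energy_gt hE hα hangle hrest hode hge with ⟨t₁, ht₁, hF0⟩ | hpos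
    · filter_upwards [eventually_gt_atTop t₁, hnear] with t ht hball s hs
      have ht0 : 0 ≤ t := ht₁.trans ht.le
      calc ‖u s - u t‖ ≤ ∫ σ in t..s, ‖F (u σ)‖ := norm_sub_le_integral_norm hF hode ht0 hs.le
        _ = 0 := by
          rw [intervalIntegral.integral_congr (g := fun _ => (0 : ℝ)) fun σ hσ => ?_]
          · simp
          · simp [hF0 σ (ht.trans_le (uIcc_of_le hs.le ▸ hσ).1)]
        _ ≤ φ (E (u t) - E ub) / α := div_nonneg (hd.nonneg (hball t le_rfl) (hge t ht0)) hα.le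
    · filter_upwards [eventually_ge_atTop 0, hnear] with t ht0 hball s hs
      exact (norm_sub_le_integral_norm hF hode ht0 hs.le).trans
        (integral_norm_le_desingOn hE hα hF hangle hode hd ht0 hs (fun σ hσ => hball σ hσ.1)
          fun σ hσ => hpos σ (ht0.trans hσ.1))
  filter_upwards [hbound] with t ht
  rw [norm_sub_rev]
  exact le_of_tendsto ((hconv.sub_const (u t)).norm) ((eventually_gt_atTop t).mono ht)

end Desingularizing

theorem stmt8 {N : ℕ} (F : EuclideanSpace ℝ (Fin N) → EuclideanSpace ℝ (Fin N))
    (hF : LocallyLipschitz F)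
    (ER : ℝ → EuclideanSpace ℝ (Fin N) → ℝ) (αR : ℝ → ℝ)
    (hER : ∀ R > (0:ℝ), ContDiff ℝ 1 (ER R) ∧ 0 < αR R ∧
      (∀ v ∈ closedBall (0 : EuclideanSpace ℝ (Fin N)) R,
        αR R * (‖gradient (ER R) v‖ * ‖F v‖) ≤ ⟪gradient (ER R) v, F v⟫) ∧
      (∀ v ∈ closedBall (0 : EuclideanSpace ℝ (Fin N)) R,
        (gradient (ER R) v = 0 ↔ F v = 0)) ∧
      (∀ x, KLAt (ER R) x))
    (u : ℝ → EuclideanSpace ℝ (Fin N))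
    (hode : ∀ t ≥ (0:ℝ), HasDerivAt u (-(F (u t))) t)
    (hbdd : ∃ C, ∀ t ≥ (0:ℝ), ‖u t‖ ≤ C) :
    ∃ uinf, F uinf = 0 ∧ Tendsto u atTop (𝓝 uinf) ∧
      IntegrableOn (fun t => -(F (u t))) (Ioi 0) ∧
      Tendsto (fun t => -(F (u t))) atTop (𝓝 0) ∧
      ∀ R > (0:ℝ), (∀ t ≥ (0:ℝ), ‖u t‖ ≤ R) →
        ∀ η r₀ φ, DesingOn (ER R) uinf η r₀ φ →
          ∀ᶠ t in atTop, ‖u t - uinf‖ ≤ (1 / αR R) * φ (ER R (u t) - ER R uinf) := by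
  have hFc := hF.continuous
  obtain ⟨C, hC⟩ := hbdd
  have hCpos : 0 < C + 1 := by linarith [(norm_nonneg (u 0)).trans (hC 0 le_rfl)]
  have hball : ∀ t ≥ 0, u t ∈ closedBall 0 (C + 1) := fun t ht =>
    mem_closedBall_zero_iff.2 ((hC t ht).trans (by linarith))
  obtain ⟨hE, hα, hangle, hrest, hKL⟩ := hER (C + 1) hCpos
  have hint : IntegrableOn (fun t => F (u t)) (Ioi 0) :=
    integrableOn_Ioi_of_forall_KLAt (hE.differentiable one_ne_zero) hα hFc
      (fun t ht => hangle _ (hball t ht)) (fun t ht => (hrest _ (hball t ht)).1) hode hC hKL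
  have hconv :=
    tendsto_limUnder_of_hasDerivAt_of_integrableOn_Ioi (fun t ht => hode t ht.le) hint.neg
  have hFlim := (hFc.tendsto _).comp hconv
  have hrestpt : F (limUnder atTop u) = 0 := eq_zero_of_tendsto_of_integrableOn_Ioi hint hFlim
  refine ⟨limUnder atTop u, hrestpt, hconv, hint.neg, by simpa [hrestpt] using hFlim.neg, ?_⟩
  intro R hR huR η r₀ φ hd
  obtain ⟨hER', hαR, hangleR, hrestR, -⟩ := hER R hR
  have hballR : ∀ t ≥ 0, u t ∈ closedBall 0 R := fun t ht => mem_closedBall_zero_iff.2 (huR t ht)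
  simpa only [one_div_mul_eq_div] using eventually_norm_sub_le_desingOn
    (hER'.differentiable one_ne_zero) hαR hFc (fun t ht => hangleR _ (hballR t ht))
    (fun t ht => (hrestR _ (hballR t ht)).1) hode hconv hd
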